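/- The kernel k := { ζ ∈ gl(V) : (u.ζ)_{N⊗L*} = 0 for all u in the universal enveloping algebra of g_- } is a g-submodule of gl(V): for every ξ ∈ g and ζ ∈ k, [ξ, ζ] ∈ k. -/

import Mathlib

/-!
Since `g = g_- + p`, it suffices to treat `ξ ∈ g_-` and `ξ ∈ p`. For `ξ ∈ g_-`, `⁅ρ ξ, ζ⁆` is
`ζ` acted on by a longer word in `g_-`. For `ξ ∈ p`, induct on the word `u`: by Jacobi,
`⁅ρ y, ⁅ρ ξ, ζ⁆⁆ = ⁅ρ ξ, ⁅ρ y, ζ⁆⁆ + ⁅ρ ⁅y, ξ⁆, ζ⁆`, where `⁅ρ y, ζ⁆` is again in the kernel and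
`⁅y, ξ⁆` splits once more into a `g_-`-part and a `p`-part. For the empty word,
`⁅ρ ξ, ζ⁆ v = ρ ξ (ζ v) - ζ (ρ ξ v)` lies in `L ⊕ T` because `p` preserves `L` and `L ⊕ T`.
-/

attribute [local instance 100] LieRing.ofAssociativeRing

/-- The kernel `k ⊆ gl(V)`: all `ζ` such that for every `u ∈ U(g_-)` (represented by a
finite list of elements of `g_-` acting on `gl(V)` by iterated commutators), the component
of `u.ζ` in `Hom(L, N)` vanishes, i.e. `(u.ζ)(L) ⊆ L ⊕ T`. -/
def fubiniKernel {g V : Type*} [LieRing g] [LieAlgebra ℂ g]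
    [AddCommGroup V] [Module ℂ V]
    (ρ : g →ₗ⁅ℂ⁆ Module.End ℂ V) (gm : Submodule ℂ g) (L T : Submodule ℂ V) :
    Set (Module.End ℂ V) :=
  {ζ | ∀ xs : List g, (∀ x ∈ xs, x ∈ gm) →
    ∀ v ∈ L, (List.foldr (fun x acc => ⁅ρ x, acc⁆) ζ xs) v ∈ L ⊔ T}

section IteratedBracket

variable {ι M : Type*} [LieRing M] (f : ι → M)

def iterLie (xs : List ι) (m : M) : M :=
  xs.foldr (fun x acc => ⁅f x, acc⁆) m

theorem iterLie_append_singleton (xs : List ι) (y : ι) (m : M) :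
    iterLie f (xs ++ [y]) m = iterLie f xs ⁅f y, m⁆ := by
  simp [iterLie, List.foldr_append]

theorem iterLie_add (xs : List ι) (m n : M) :
    iterLie f xs (m + n) = iterLie f xs m + iterLie f xs n := by
  induction xs with
  | nil => rfl
  | cons y ys ih => simp only [iterLie, List.foldr_cons] at ih ⊢; rw [ih, lie_add]

end IteratedBracket

section FubiniKernel

variable {g V : Type*} [LieRing g] [LieAlgebra ℂ g] [AddCommGroup V] [Module ℂ V]
  (ρ : g →ₗ⁅ℂ⁆ Module.End ℂ V) (gm gp : Submodule ℂ g) (L T : Submodule ℂ V)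

theorem mem_fubiniKernel {ζ : Module.End ℂ V} :
    ζ ∈ fubiniKernel ρ gm L T ↔
      ∀ xs : List g, (∀ x ∈ xs, x ∈ gm) → ∀ v ∈ L, iterLie ρ xs ζ v ∈ L ⊔ T :=
  Iff.rfl

variable {ρ gm gp L T}

theorem lie_mem_fubiniKernel_of_mem_gm {y : g} (hy : y ∈ gm) {ζ : Module.End ℂ V}
    (hζ : ζ ∈ fubiniKernel ρ gm L T) : ⁅ρ y, ζ⁆ ∈ fubiniKernel ρ gm L T := by
  rw [mem_fubiniKernel] at hζ ⊢
  intro xs hxs v hv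
  rw [← iterLie_append_singleton]
  refine hζ _ (fun z hz => ?_) v hv
  rcases List.mem_append.mp hz with hz | hz
  · exact hxs z hz
  · exact List.mem_singleton.mp hz ▸ hy

theorem iterLie_lie_apply_mem_of_forall_mem_gp (hsplit : gm ⊔ gp = ⊤) {xs : List g}
    (hxs : ∀ x ∈ xs, x ∈ gm) {ζ : Module.End ℂ V} (hζ : ζ ∈ fubiniKernel ρ gm L T)
    (hp : ∀ b ∈ gp, ∀ v ∈ L, iterLie ρ xs ⁅ρ b, ζ⁆ v ∈ L ⊔ T) (ξ : g) :
    ∀ v ∈ L, iterLie ρ xs ⁅ρ ξ, ζ⁆ v ∈ L ⊔ T := by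
  intro v hv
  obtain ⟨a, ha, b, hb, rfl⟩ := Submodule.mem_sup.mp (hsplit ▸ Submodule.mem_top (x := ξ))
  rw [map_add, add_lie, iterLie_add, LinearMap.add_apply]
  exact add_mem (lie_mem_fubiniKernel_of_mem_gm ha hζ xs hxs v hv) (hp b hb v hv)

variable (hpL : ∀ x ∈ gp, ∀ v ∈ L, ρ x v ∈ L) (hpLT : ∀ x ∈ gp, ∀ w ∈ L ⊔ T, ρ x w ∈ L ⊔ T)
include hpL hpLT

theorem lie_apply_mem_of_mem_gp {b : g} (hb : b ∈ gp) {ζ : Module.End ℂ V}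
    (hζ : ζ ∈ fubiniKernel ρ gm L T) {v : V} (hv : v ∈ L) : ⁅ρ b, ζ⁆ v ∈ L ⊔ T := by
  rw [LieRing.of_associative_ring_bracket, LinearMap.sub_apply]
  exact sub_mem (hpLT b hb _ (hζ [] (by simp) v hv)) (hζ [] (by simp) _ (hpL b hb v hv))

theorem iterLie_lie_apply_mem_of_mem_gp (hsplit : gm ⊔ gp = ⊤) (xs : List g)
    (hxs : ∀ x ∈ xs, x ∈ gm) {b : g} (hb : b ∈ gp) {ζ : Module.End ℂ V}
    (hζ : ζ ∈ fubiniKernel ρ gm L T) : ∀ v ∈ L, iterLie ρ xs ⁅ρ b, ζ⁆ v ∈ L ⊔ T := by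
  induction xs using List.reverseRecOn generalizing b ζ with
  | nil => exact fun v hv => lie_apply_mem_of_mem_gp hpL hpLT hb hζ hv
  | append_singleton ys y ih =>
    have hy : y ∈ gm := hxs y (by simp)
    have hys : ∀ z ∈ ys, z ∈ gm := fun z hz => hxs z (by simp [hz])
    have jacobi : ⁅ρ y, ⁅ρ b, ζ⁆⁆ = ⁅ρ b, ⁅ρ y, ζ⁆⁆ + ⁅ρ ⁅y, b⁆, ζ⁆ := by
      rw [leibniz_lie, LieHom.map_lie, add_comm]
    intro v hv
    rw [iterLie_append_singleton, jacobi, iterLie_add, LinearMap.add_apply]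
    refine add_mem (ih hys hb (lie_mem_fubiniKernel_of_mem_gm hy hζ) v hv) ?_
    exact iterLie_lie_apply_mem_of_forall_mem_gp hsplit hys hζ
      (fun _ hb' => ih hys hb' hζ) _ v hv

end FubiniKernel

theorem stmt3_general {g V : Type*} [LieRing g] [LieAlgebra ℂ g]
    [AddCommGroup V] [Module ℂ V]
    (ρ : g →ₗ⁅ℂ⁆ Module.End ℂ V)
    (gm gp : Submodule ℂ g)
    -- g = g_- ⊕ p
    (hsplit : gm ⊔ gp = ⊤)
    (L T : Submodule ℂ V)
    -- p = g_{≥0} preserves the line L ...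
    (hpL : ∀ x ∈ gp, ∀ v ∈ L, ρ x v ∈ L)
    -- ... and preserves L ⊕ T
    (hpLT : ∀ x ∈ gp, ∀ w ∈ L ⊔ T, ρ x w ∈ L ⊔ T) :
    ∀ ξ : g, ∀ ζ ∈ fubiniKernel ρ gm L T, ⁅ρ ξ, ζ⁆ ∈ fubiniKernel ρ gm L T :=
  fun ξ _ hζ xs hxs => iterLie_lie_apply_mem_of_forall_mem_gp hsplit hxs hζ
    (fun _ hb => iterLie_lie_apply_mem_of_mem_gp hpL hpLT hsplit xs hxs hb hζ) ξ

/-- In the setup `g = g_- ⊕ p` with `p = g_{≥0}` the parabolic stabilizing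
the highest weight line `L` (hence preserving both `L` and the filtrand `L ⊕ T`), the kernel
`k = { ζ ∈ gl(V) : (u.ζ)_{N⊗L*} = 0 for all u ∈ U(g_-) }` is a `g`-submodule of `gl(V)`:
for every `ξ ∈ g` and `ζ ∈ k` one has `[ξ, ζ] ∈ k`. -/
theorem stmt3 {g V : Type*} [LieRing g] [LieAlgebra ℂ g]
    [AddCommGroup V] [Module ℂ V]
    (ρ : g →ₗ⁅ℂ⁆ Module.End ℂ V)
    (gm gp : Submodule ℂ g)
    -- g = g_- ⊕ p
    (hsplit : gm ⊔ gp = ⊤)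
    (L T N : Submodule ℂ V)
    (hLT : L ⊓ T = ⊥) (hcompl : IsCompl (L ⊔ T) N)
    -- p = g_{≥0} preserves the line L ...
    (hpL : ∀ x ∈ gp, ∀ v ∈ L, ρ x v ∈ L)
    -- ... and preserves L ⊕ T
    (hpLT : ∀ x ∈ gp, ∀ w ∈ L ⊔ T, ρ x w ∈ L ⊔ T) :
    ∀ ξ : g, ∀ ζ ∈ fubiniKernel ρ gm L T, ⁅ρ ξ, ζ⁆ ∈ fubiniKernel ρ gm L T :=
  stmt3_general ρ gm gp hsplit L T hpL hpLT
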